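/- Let (Ω, P) be a probability space and let X : Fin 2 × Fin 2 → Fin N → Ω → ℝ be a mutually independent family of random variables, each taking values in {−1, 1}, with common mean μ(i,j) within each family (i,j). Let S = μ(0,0) + μ(1,0) + μ(0,1) − μ(1,1) and S̄ = m(0,0) + m(1,0) + m(0,1) − m(1,1) with m(i,j) = (1/N) ∑ₖ X (i,j) k. Let 0 < ε < 2√2 and 0 < δ < 1. If N ≥ (32/ε²)·ln(2/(1 − (1−δ)^(1/4))), then P[|S̄ − S| > ε] ≤ δ. -/

import Mathlib

open MeasureTheory ProbabilityTheory Finset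

noncomputable section

/-- Empirical mean `m(i,j) = (1/N) ∑ₖ X (i,j) k`. -/
def empMean {Ω : Type*} {N : ℕ} (X : Fin 2 × Fin 2 → Fin N → Ω → ℝ)
    (ij : Fin 2 × Fin 2) (ω : Ω) : ℝ :=
  (1 / N) * ∑ k, X ij k ω

/-- Empirical CHSH estimate `S̄ = m(0,0) + m(1,0) + m(0,1) − m(1,1)`. -/
def SbarEmp {Ω : Type*} {N : ℕ} (X : Fin 2 × Fin 2 → Fin N → Ω → ℝ) (ω : Ω) : ℝ :=
  empMean X (0, 0) ω + empMean X (1, 0) ω + empMean X (0, 1) ω - empMean X (1, 1) ω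

/-- True CHSH value `S = μ(0,0) + μ(1,0) + μ(0,1) − μ(1,1)`. -/
def Strue (μ : Fin 2 × Fin 2 → ℝ) : ℝ := μ (0, 0) + μ (1, 0) + μ (0, 1) - μ (1, 1)

end


/-!
With the CHSH signs `σ = (+, +, +, −)`, `N (S̄ − S)` is the centred sum of the `4N` independent
variables `σ(i,j) X (i,j) k ∈ [−1, 1]`, so Hoeffding's inequality bounds `P[|S̄ − S| ≥ ε]` by
`2 exp(−N ε² / 8) ≤ 2 exp(−N ε² / 32)`, and the choice of `N` makes this at most
`1 − (1 − δ)^(1/4) ≤ δ`.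
-/

open Real
open scoped NNReal

lemma one_sub_rpow_one_sub_mem_Ioc {δ y : ℝ} (hδ : 0 < δ) (hδ₁ : δ ≤ 1) (hy : 0 < y)
    (hy₁ : y ≤ 1) : 1 - (1 - δ) ^ y ∈ Set.Ioc 0 δ := by
  have hlt : (1 - δ) ^ y < 1 := Real.rpow_lt_one (by linarith) (by linarith) hy
  have hle : 1 - δ ≤ (1 - δ) ^ y := Real.self_le_rpow_of_le_one (by linarith) (by linarith) hy₁
  constructor <;> linarith

lemma two_mul_exp_neg_div_le {t c x : ℝ} (ht : 0 < t) (hc : 0 < c) (hx : c * log (2 / t) ≤ x) :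
    2 * exp (-(x / c)) ≤ t := by
  have hlog : log (2 / t) ≤ x / c := by rwa [le_div_iff₀ hc, mul_comm]
  calc 2 * exp (-(x / c)) ≤ 2 * exp (-log (2 / t)) := by gcongr
    _ = t := by
        rw [exp_neg, exp_log (by positivity)]
        field_simp

section Hoeffding

variable {Ω : Type*} [MeasurableSpace Ω] {P : Measure Ω}

lemma ProbabilityTheory.HasSubgaussianMGF.measureReal_abs_ge_le [IsFiniteMeasure P]
    {Y : Ω → ℝ} {c : ℝ≥0} (hY : HasSubgaussianMGF Y c P) {ε : ℝ} (hε : 0 ≤ ε) :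
    P.real {ω | ε ≤ |Y ω|} ≤ 2 * exp (-ε ^ 2 / (2 * c)) := by
  have hsplit : {ω | ε ≤ |Y ω|} ⊆ {ω | ε ≤ Y ω} ∪ {ω | ε ≤ (-Y) ω} := fun ω (hω : ε ≤ |Y ω|) ↦
    le_abs.1 hω
  calc P.real {ω | ε ≤ |Y ω|}
      ≤ P.real {ω | ε ≤ Y ω} + P.real {ω | ε ≤ (-Y) ω} :=
        (measureReal_mono hsplit).trans (measureReal_union_le _ _)
    _ ≤ exp (-ε ^ 2 / (2 * c)) + exp (-ε ^ 2 / (2 * c)) :=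
        add_le_add (hY.measure_ge_le hε) (hY.neg.measure_ge_le hε)
    _ = 2 * exp (-ε ^ 2 / (2 * c)) := by ring

/-- Two-sided **Hoeffding inequality**. -/
theorem measureReal_abs_sum_sub_integral_ge_le [IsProbabilityMeasure P] {ι : Type*} [Fintype ι]
    {Z : ι → Ω → ℝ} (hmeas : ∀ i, Measurable (Z i)) (hindep : iIndepFun Z P) {a b : ℝ}
    (hZ : ∀ i ω, Z i ω ∈ Set.Icc a b) {ε : ℝ} (hε : 0 ≤ ε) :
    P.real {ω | ε ≤ |∑ i, (Z i ω - P[Z i])|}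
      ≤ 2 * exp (-ε ^ 2 / (2 * Fintype.card ι * ((b - a) / 2) ^ 2)) := by
  have hcentered : iIndepFun (fun i ↦ (· - P[Z i]) ∘ Z i) P :=
    hindep.comp _ fun _ ↦ measurable_id.sub_const _
  have hsubG : HasSubgaussianMGF (fun ω ↦ ∑ i, (Z i ω - P[Z i]))
      (∑ _i : ι, (‖b - a‖₊ / 2) ^ 2) P :=
    HasSubgaussianMGF.sum_of_iIndepFun hcentered
      fun i _ ↦ hasSubgaussianMGF_of_mem_Icc (hmeas i).aemeasurable (ae_of_all _ (hZ i))
  convert hsubG.measureReal_abs_ge_le hε using 4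
  simp only [sum_const, card_univ, nsmul_eq_mul, NNReal.coe_mul, NNReal.coe_natCast,
    NNReal.coe_pow, NNReal.coe_div, NNReal.coe_ofNat, coe_nnnorm, Real.norm_eq_abs, div_pow,
    sq_abs]
  ring

end Hoeffding

def chshSign (ij : Fin 2 × Fin 2) : ℝ := if ij = (1, 1) then -1 else 1

lemma abs_chshSign (ij : Fin 2 × Fin 2) : |chshSign ij| = 1 := by
  unfold chshSign
  split_ifs <;> simp

lemma sum_chshSign_mul_sub_eq {Ω : Type*} {N : ℕ} (hN : N ≠ 0)
    (X : Fin 2 × Fin 2 → Fin N → Ω → ℝ) (μ : Fin 2 × Fin 2 → ℝ) (ω : Ω) :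
    ∑ p : (Fin 2 × Fin 2) × Fin N, chshSign p.1 * (X p.1 p.2 ω - μ p.1)
      = N * (SbarEmp X ω - Strue μ) := by
  have hN' : (N : ℝ) ≠ 0 := Nat.cast_ne_zero.2 hN
  simp only [Fintype.sum_prod_type, ← mul_sum, sum_sub_distrib, sum_const, card_univ,
    Fintype.card_fin, nsmul_eq_mul, Fin.sum_univ_two, SbarEmp, empMean, Strue, chshSign]
  norm_num
  field_simp
  ring

theorem measureReal_le_abs_SbarEmp_sub_Strue_le {Ω : Type*} [MeasurableSpace Ω]
    (P : Measure Ω) [IsProbabilityMeasure P] {N : ℕ} (hN : N ≠ 0)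
    {X : Fin 2 × Fin 2 → Fin N → Ω → ℝ} (hmeas : ∀ ij k, Measurable (X ij k))
    (hindep : iIndepFun (fun p : (Fin 2 × Fin 2) × Fin N ↦ X p.1 p.2) P)
    (hbdd : ∀ ij k ω, |X ij k ω| ≤ 1) {μ : Fin 2 × Fin 2 → ℝ}
    (hmean : ∀ ij k, ∫ ω, X ij k ω ∂P = μ ij) {ε : ℝ} (hε : 0 ≤ ε) :
    P.real {ω | ε ≤ |SbarEmp X ω - Strue μ|} ≤ 2 * exp (-(N * ε ^ 2 / 8)) := by
  set Z : (Fin 2 × Fin 2) × Fin N → Ω → ℝ := fun p ω ↦ chshSign p.1 * X p.1 p.2 ω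
  have hZ : ∀ p ω, Z p ω ∈ Set.Icc (-1) 1 := fun p ω ↦ abs_le.1 <| by
    rw [abs_mul, abs_chshSign, one_mul]
    exact hbdd p.1 p.2 ω
  have hcentered : ∀ ω, ∑ p, (Z p ω - P[Z p]) = N * (SbarEmp X ω - Strue μ) := fun ω ↦ by
    simp only [Z, integral_const_mul, hmean, ← mul_sub]
    exact sum_chshSign_mul_sub_eq hN X μ ω
  have hhoeffding := measureReal_abs_sum_sub_integral_ge_le (Z := Z)
    (fun p ↦ (hmeas p.1 p.2).const_mul (chshSign p.1))
    (hindep.comp (fun p x ↦ chshSign p.1 * x) fun _ ↦ measurable_const_mul _) hZ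
    (ε := N * ε) (by positivity)
  have hN' : (N : ℝ) ≠ 0 := Nat.cast_ne_zero.2 hN
  have hexponent : -(N * ε) ^ 2 / (2 * Fintype.card ((Fin 2 × Fin 2) × Fin N) * ((1 - -1) / 2) ^ 2)
      = -(N * ε ^ 2 / 8) := by
    simp only [Fintype.card_prod, Fintype.card_fin]
    push_cast
    field_simp
    ring
  simp only [hcentered, abs_mul, Nat.abs_cast, hexponent] at hhoeffding
  refine le_trans (measureReal_mono (Set.ofPred_subset_ofPred.2 fun ω hω ↦ ?_)) hhoeffding
  exact mul_le_mul_of_nonneg_left hω (Nat.cast_nonneg N)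

theorem hoeffding_chsh_sample_complexity_general {Ω : Type*} [MeasurableSpace Ω]
    (P : Measure Ω) [IsProbabilityMeasure P] (N : ℕ) (hN : 0 < N)
    (X : Fin 2 × Fin 2 → Fin N → Ω → ℝ)
    (hmeas : ∀ ij k, Measurable (X ij k))
    (hindep : iIndepFun
      (fun p : (Fin 2 × Fin 2) × Fin N => X p.1 p.2) P)
    (hval : ∀ ij k ω, X ij k ω = 1 ∨ X ij k ω = -1)
    (μ : Fin 2 × Fin 2 → ℝ)
    (hmean : ∀ ij k, ∫ ω, X ij k ω ∂P = μ ij)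
    (ε δ : ℝ) (hε : 0 < ε) (hδ : 0 < δ) (hδ' : δ < 1)
    (hNbig : (N : ℝ) ≥ (32 / ε ^ 2) * Real.log (2 / (1 - (1 - δ) ^ ((1 : ℝ) / 4)))) :
    (P {ω | ε < |SbarEmp X ω - Strue μ|}).toReal ≤ δ := by
  have hbdd : ∀ ij k ω, |X ij k ω| ≤ 1 := fun ij k ω ↦ by
    rcases hval ij k ω with h | h <;> simp [h]
  have hbound := measureReal_le_abs_SbarEmp_sub_Strue_le P hN.ne' hmeas hindep hbdd hmean hε.le
  obtain ⟨ht, htδ⟩ :=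
    one_sub_rpow_one_sub_mem_Ioc hδ hδ'.le (y := 1 / 4) (by norm_num) (by norm_num)
  calc (P {ω | ε < |SbarEmp X ω - Strue μ|}).toReal
      ≤ P.real {ω | ε ≤ |SbarEmp X ω - Strue μ|} :=
        measureReal_mono (Set.ofPred_subset_ofPred.2 fun _ ↦ le_of_lt)
    _ ≤ 2 * exp (-(N * ε ^ 2 / 8)) := hbound
    _ ≤ 2 * exp (-(N / (32 / ε ^ 2))) := by
        rw [div_div_eq_mul_div]
        gcongr
        norm_num
    _ ≤ 1 - (1 - δ) ^ ((1 : ℝ) / 4) := two_mul_exp_neg_div_le ht (by positivity) hNbig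
    _ ≤ δ := htδ

/-- Hoeffding-based sample complexity for CHSH estimation: for `0 < ε < 2√2` and
`0 < δ < 1`, if `N ≥ (32/ε²)·ln(2/(1 − (1−δ)^(1/4)))` then `P[|S̄ − S| > ε] ≤ δ`. -/
theorem hoeffding_chsh_sample_complexity {Ω : Type*} [MeasurableSpace Ω]
    (P : Measure Ω) [IsProbabilityMeasure P] (N : ℕ) (hN : 0 < N)
    (X : Fin 2 × Fin 2 → Fin N → Ω → ℝ)
    (hmeas : ∀ ij k, Measurable (X ij k))
    (hindep : iIndepFun
      (fun p : (Fin 2 × Fin 2) × Fin N => X p.1 p.2) P)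
    (hval : ∀ ij k ω, X ij k ω = 1 ∨ X ij k ω = -1)
    (μ : Fin 2 × Fin 2 → ℝ)
    (hmean : ∀ ij k, ∫ ω, X ij k ω ∂P = μ ij)
    (ε δ : ℝ) (hε : 0 < ε) (hε' : ε < 2 * Real.sqrt 2) (hδ : 0 < δ) (hδ' : δ < 1)
    (hNbig : (N : ℝ) ≥ (32 / ε ^ 2) * Real.log (2 / (1 - (1 - δ) ^ ((1 : ℝ) / 4)))) :
    (P {ω | ε < |SbarEmp X ω - Strue μ|}).toReal ≤ δ :=
  hoeffding_chsh_sample_complexity_general P N hN X hmeas hindep hval μ hmean ε δ hε hδ hδ' hNbig
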